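/- Let C1 and C2 be bar-complexes with ki bars each, of which ei are even and oi are odd (ei + oi = ki). Then C1 ⊗ C2 is a bar-complex with e1 + e2 + k1·k2 even bars and o1 + o2 + k1·k2 odd bars. -/

import Mathlib

/-!
Over `𝔽₂` the differential `d₁ ⊗ 1 + 1 ⊗ d₂` squares to zero without signs. By rank–nullity, a
complex with `d² = 0` whose even and odd parts have dimensions `e + o + 1` and `e + o` is a
bar-complex with `e` even and `o` odd bars as soon as its two differentials have ranks at least
`e` and `o`, and `C₁ ⊗ C₂` has dimensions of this form. For the rank bounds, write either
differential of `C₁ ⊗ C₂` as `E₁ ⊗ P ⊕ O₁ ⊗ Q → E₁ ⊗ Q ⊕ O₁ ⊗ P` with `g : P → Q` one of `a₂`,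
`b₂`. Projecting to `E₁ ⊗ coker g` leaves `b₁ ⊗ (Q → coker g)`; on `E₁ ⊗ P` the projection to
`O₁ ⊗ P` is `a₁ ⊗ 1`, and on `ker a₁ ⊗ P` there remains `1 ⊗ g`. Hence the rank is at least
`rk b₁ · dim coker g + rk a₁ · dim P + dim ker a₁ · rk g`, which is `o₁ + o₂ + k₁k₂` for `g = a₂`
and `e₁ + e₂ + k₁k₂` for `g = b₂`.
-/

open TensorProduct Module LinearMap

theorem CharTwo.add_self_eq_zero_of_module (R : Type*) {M : Type*} [Ring R] [CharP R 2]
    [AddCommGroup M] [Module R M] (x : M) : x + x = 0 := by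
  rw [← two_smul R x, CharTwo.two_eq_zero, zero_smul]

section Rank

variable {K X Y Z W : Type*} [Field K] [AddCommGroup X] [Module K X] [AddCommGroup Y] [Module K Y]
  [AddCommGroup Z] [Module K Z] [AddCommGroup W] [Module K W]

theorem LinearMap.finrank_range_tensorProduct_map [FiniteDimensional K X]
    [FiniteDimensional K Z] (f : X →ₗ[K] Y) (g : Z →ₗ[K] W) :
    finrank K (range (map f g)) = finrank K (range f) * finrank K (range g) := by
  have hfac : map f g = mapIncl (range f) (range g) ∘ₗ map f.rangeRestrict g.rangeRestrict := by
    rw [mapIncl, ← map_comp, subtype_comp_codRestrict, subtype_comp_codRestrict]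
  rw [hfac, range_comp_of_range_eq_top _ (range_eq_top.mpr
      (TensorProduct.map_surjective f.surjective_rangeRestrict g.surjective_rangeRestrict)),
    finrank_range_of_inj (Module.Flat.tensorProduct_mapIncl_injective_of_right _ _),
    finrank_tensorProduct]

theorem LinearMap.finrank_range_comp_add_finrank_range_comp_le [FiniteDimensional K Y]
    (M : X →ₗ[K] Y) (i : Z →ₗ[K] X) (p : Y →ₗ[K] W) (h : p ∘ₗ M ∘ₗ i = 0) :
    finrank K (range (p ∘ₗ M)) + finrank K (range (M ∘ₗ i)) ≤ finrank K (range M) := by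
  have hle : range (M ∘ₗ i) ≤ range M := range_comp_le_range i M
  have hker : (range (M ∘ₗ i)).comap (range M).subtype ≤ ker (p.domRestrict (range M)) := by
    rintro ⟨_, _⟩ ⟨z, rfl⟩
    simpa using LinearMap.congr_fun h z
  calc finrank K (range (p ∘ₗ M)) + finrank K (range (M ∘ₗ i))
      = finrank K (range (p.domRestrict (range M)))
          + finrank K ((range (M ∘ₗ i)).comap (range M).subtype) := by
        rw [range_domRestrict, range_comp, (Submodule.comapSubtypeEquivOfLe hle).finrank_eq]
    _ ≤ finrank K (range (p.domRestrict (range M))) + finrank K (ker (p.domRestrict (range M))) :=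
        Nat.add_le_add_left (Submodule.finrank_mono hker) _
    _ = finrank K (range M) := finrank_range_add_finrank_ker _

end Rank

section TensorDiff

variable {R E O P Q : Type*} [CommRing R] [AddCommGroup E] [Module R E] [AddCommGroup O]
  [Module R O] [AddCommGroup P] [Module R P] [AddCommGroup Q] [Module R Q]

/-- With `(g, h) = (a₂, b₂)` this is the even-to-odd component of the differential
`d₁ ⊗ 1 + 1 ⊗ d₂` of `(E₁ ⇄ O₁) ⊗ (E₂ ⇄ O₂)`, and with `(g, h) = (b₂, a₂)` the odd-to-even one. -/
def tensorDiff (a : E →ₗ[R] O) (b : O →ₗ[R] E) (g : P →ₗ[R] Q) (h : Q →ₗ[R] P) :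
    E ⊗[R] P × O ⊗[R] Q →ₗ[R] E ⊗[R] Q × O ⊗[R] P :=
  ((map LinearMap.id g).coprod (map b LinearMap.id)).prod
    ((map a LinearMap.id).coprod (map LinearMap.id h))

theorem tensorDiff_comp_tensorDiff [CharP R 2] {a : E →ₗ[R] O} {b : O →ₗ[R] E}
    {g : P →ₗ[R] Q} {h : Q →ₗ[R] P} (hab : a ∘ₗ b = 0) (hba : b ∘ₗ a = 0) (hgh : g ∘ₗ h = 0)
    (hhg : h ∘ₗ g = 0) :
    tensorDiff a b h g ∘ₗ tensorDiff a b g h = 0 := by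
  ext x y <;> simp [tensorDiff, ← LinearMap.comp_apply, hab, hba, hgh, hhg,
    CharTwo.add_self_eq_zero_of_module R]

end TensorDiff

section LowerBound

variable {K E O P Q : Type*} [Field K] [AddCommGroup E] [Module K E] [AddCommGroup O]
  [Module K O] [AddCommGroup P] [Module K P] [AddCommGroup Q] [Module K Q]
  [FiniteDimensional K E] [FiniteDimensional K O] [FiniteDimensional K P] [FiniteDimensional K Q]

theorem le_finrank_range_prod_map (a : E →ₗ[K] O) (g : P →ₗ[K] Q) :
    finrank K (range a) * finrank K P + finrank K (ker a) * finrank K (range g)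
      ≤ finrank K (range ((map LinearMap.id g).prod (map a LinearMap.id))) := by
  have hN := finrank_range_comp_add_finrank_range_comp_le
    ((map LinearMap.id g).prod (map a LinearMap.id)) (map (ker a).subtype LinearMap.id)
    (snd K _ _) (by rw [← comp_assoc, snd_prod, ← map_comp, comp_ker_subtype, map_zero_left])
  have hker := Submodule.finrank_map_le (fst K _ _)
    (range ((map LinearMap.id g).prod (map a LinearMap.id) ∘ₗ map (ker a).subtype LinearMap.id))
  rw [snd_prod, finrank_range_tensorProduct_map, LinearMap.range_id, finrank_top] at hN
  rw [← range_comp, ← comp_assoc, fst_prod, ← map_comp, LinearMap.id_comp, LinearMap.comp_id,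
    finrank_range_tensorProduct_map, Submodule.range_subtype] at hker
  omega

theorem le_finrank_range_tensorDiff (a : E →ₗ[K] O) (b : O →ₗ[K] E) (g : P →ₗ[K] Q)
    (h : Q →ₗ[K] P) :
    finrank K (range b) * finrank K (Q ⧸ range g) + (finrank K (range a) * finrank K P
      + finrank K (ker a) * finrank K (range g)) ≤ finrank K (range (tensorDiff a b g h)) := by
  have hproj : (map LinearMap.id (range g).mkQ ∘ₗ fst K _ _) ∘ₗ tensorDiff a b g h
      = (0 : E ⊗[K] P →ₗ[K] E ⊗[K] (Q ⧸ range g)).coprod (map b (range g).mkQ) := by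
    rw [tensorDiff, comp_assoc, fst_prod, comp_coprod, ← map_comp, ← map_comp,
      range_mkQ_comp g, map_zero_right, LinearMap.id_comp, LinearMap.comp_id]
  have hinl :
      tensorDiff a b g h ∘ₗ inl K _ _ = (map LinearMap.id g).prod (map a LinearMap.id) := by
    rw [tensorDiff, prod_comp, coprod_inl, coprod_inl]
  have hM := finrank_range_comp_add_finrank_range_comp_le (tensorDiff a b g h) (inl K _ _)
    (map LinearMap.id (range g).mkQ ∘ₗ fst K _ _) (by rw [← comp_assoc, hproj, coprod_inl])
  rw [hproj, range_coprod, range_zero, bot_sup_eq, finrank_range_tensorProduct_map,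
    Submodule.range_mkQ, finrank_top, hinl] at hM
  have := le_finrank_range_prod_map a g
  omega

end LowerBound

/-- A (parity-)graded chain complex over `𝔽₂` is given by its even part `E`, its odd part
`O`, and the two components `a : E → O`, `b : O → E` of the degree `-1` differential.  It is a
bar-complex with `e` even bars and `o` odd bars if it is the direct sum of a one-dimensional
summand in grading `0` (even) with zero differential, `e` bars `(T → B)` with `B` even, and
`o` bars with `B` odd.  Over a field this is equivalent to the homological conditions below:
`d² = 0`, the homology of the odd part vanishes, the homology of the even part is
one-dimensional, `e` is the rank of `b` (counting bars with even `B`), and `o` is the rank of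
`a` (counting bars with odd `B`). -/
def IsGradedBarComplex {E O : Type*} [AddCommGroup E] [Module (ZMod 2) E]
    [AddCommGroup O] [Module (ZMod 2) O]
    (a : E →ₗ[ZMod 2] O) (b : O →ₗ[ZMod 2] E) (e o : ℕ) : Prop :=
  a ∘ₗ b = 0 ∧ b ∘ₗ a = 0 ∧
  LinearMap.ker b = LinearMap.range a ∧
  LinearMap.range b ≤ LinearMap.ker a ∧
  Module.finrank (ZMod 2) (LinearMap.ker a) =
    Module.finrank (ZMod 2) (LinearMap.range b) + 1 ∧
  Module.finrank (ZMod 2) (LinearMap.range b) = e ∧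
  Module.finrank (ZMod 2) (LinearMap.range a) = o

namespace IsGradedBarComplex

variable {E O : Type*} [AddCommGroup E] [Module (ZMod 2) E] [AddCommGroup O] [Module (ZMod 2) O]
  {a : E →ₗ[ZMod 2] O} {b : O →ₗ[ZMod 2] E} {e o : ℕ}

theorem finrank_ker (hC : IsGradedBarComplex a b e o) : finrank (ZMod 2) (ker a) = e + 1 := by
  obtain ⟨-, -, -, -, hker, he, -⟩ := hC
  rw [hker, he]

theorem finrank_odd [FiniteDimensional (ZMod 2) O] (hC : IsGradedBarComplex a b e o) :
    finrank (ZMod 2) O = e + o := by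
  obtain ⟨-, -, hexact, -, -, he, ho⟩ := hC
  rw [← finrank_range_add_finrank_ker b, hexact, he, ho]

theorem finrank_odd_quotient_range [FiniteDimensional (ZMod 2) O]
    (hC : IsGradedBarComplex a b e o) : finrank (ZMod 2) (O ⧸ range a) = e := by
  have := Submodule.finrank_quotient_add_finrank (range a)
  have := hC.finrank_odd
  obtain ⟨-, -, -, -, -, -, ho⟩ := hC
  omega

theorem finrank_even [FiniteDimensional (ZMod 2) E] (hC : IsGradedBarComplex a b e o) :
    finrank (ZMod 2) E = e + o + 1 := by
  have := finrank_range_add_finrank_ker a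
  have := hC.finrank_ker
  obtain ⟨-, -, -, -, -, -, ho⟩ := hC
  omega

theorem finrank_even_quotient_range [FiniteDimensional (ZMod 2) E]
    (hC : IsGradedBarComplex a b e o) : finrank (ZMod 2) (E ⧸ range b) = o + 1 := by
  have := Submodule.finrank_quotient_add_finrank (range b)
  have := hC.finrank_even
  obtain ⟨-, -, -, -, -, he, -⟩ := hC
  omega

theorem of_le_finrank_range [FiniteDimensional (ZMod 2) E] [FiniteDimensional (ZMod 2) O]
    (hab : a ∘ₗ b = 0) (hba : b ∘ₗ a = 0)
    (he : e ≤ finrank (ZMod 2) (range b)) (ho : o ≤ finrank (ZMod 2) (range a))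
    (hE : finrank (ZMod 2) E = e + o + 1) (hO : finrank (ZMod 2) O = e + o) :
    IsGradedBarComplex a b e o := by
  have hb : range b ≤ ker a := range_le_ker_iff.mpr hab
  have ha : range a ≤ ker b := range_le_ker_iff.mpr hba
  have := Submodule.finrank_mono hb
  have := Submodule.finrank_mono ha
  have := finrank_range_add_finrank_ker a
  have := finrank_range_add_finrank_ker b
  refine ⟨hab, hba, (Submodule.eq_of_le_of_finrank_eq ha ?_).symm, hb, ?_, ?_, ?_⟩ <;> omega

end IsGradedBarComplex

/-- If `C₁`, `C₂` are bar-complexes with `kᵢ = eᵢ + oᵢ` bars, of which `eᵢ` are even and `oᵢ`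
odd, then `C₁ ⊗ C₂` (even part `E₁⊗E₂ ⊕ O₁⊗O₂`, odd part `E₁⊗O₂ ⊕ O₁⊗E₂`, differential
`d₁ ⊗ 1 + 1 ⊗ d₂`) is a bar-complex with `e₁ + e₂ + k₁k₂` even bars and `o₁ + o₂ + k₁k₂`
odd bars. -/
theorem stmt_6 {E1 O1 E2 O2 : Type*}
    [AddCommGroup E1] [Module (ZMod 2) E1] [AddCommGroup O1] [Module (ZMod 2) O1]
    [AddCommGroup E2] [Module (ZMod 2) E2] [AddCommGroup O2] [Module (ZMod 2) O2]
    [FiniteDimensional (ZMod 2) E1] [FiniteDimensional (ZMod 2) O1]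
    [FiniteDimensional (ZMod 2) E2] [FiniteDimensional (ZMod 2) O2]
    (a1 : E1 →ₗ[ZMod 2] O1) (b1 : O1 →ₗ[ZMod 2] E1)
    (a2 : E2 →ₗ[ZMod 2] O2) (b2 : O2 →ₗ[ZMod 2] E2)
    (e1 o1 e2 o2 : ℕ)
    (h1 : IsGradedBarComplex a1 b1 e1 o1) (h2 : IsGradedBarComplex a2 b2 e2 o2) :
    IsGradedBarComplex
      (LinearMap.prod
        ((TensorProduct.map LinearMap.id a2).coprod (TensorProduct.map b1 LinearMap.id))
        ((TensorProduct.map a1 LinearMap.id).coprod (TensorProduct.map LinearMap.id b2))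
        : TensorProduct (ZMod 2) E1 E2 × TensorProduct (ZMod 2) O1 O2 →ₗ[ZMod 2]
          TensorProduct (ZMod 2) E1 O2 × TensorProduct (ZMod 2) O1 E2)
      (LinearMap.prod
        ((TensorProduct.map LinearMap.id b2).coprod (TensorProduct.map b1 LinearMap.id))
        ((TensorProduct.map a1 LinearMap.id).coprod (TensorProduct.map LinearMap.id a2))
        : TensorProduct (ZMod 2) E1 O2 × TensorProduct (ZMod 2) O1 E2 →ₗ[ZMod 2]
          TensorProduct (ZMod 2) E1 E2 × TensorProduct (ZMod 2) O1 O2)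
      (e1 + e2 + (e1 + o1) * (e2 + o2))
      (o1 + o2 + (e1 + o1) * (e2 + o2)) := by
  have ⟨hab1, hba1, _, _, _, he1, ho1⟩ := h1
  have ⟨hab2, hba2, _, _, _, he2, ho2⟩ := h2
  have hA := le_finrank_range_tensorDiff a1 b1 a2 b2
  have hB := le_finrank_range_tensorDiff a1 b1 b2 a2
  rw [he1, ho1, h1.finrank_ker, ho2, h2.finrank_even, h2.finrank_odd_quotient_range] at hA
  rw [he1, ho1, h1.finrank_ker, he2, h2.finrank_odd, h2.finrank_even_quotient_range] at hB
  change IsGradedBarComplex (tensorDiff a1 b1 a2 b2) (tensorDiff a1 b1 b2 a2) _ _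
  refine IsGradedBarComplex.of_le_finrank_range
    (tensorDiff_comp_tensorDiff hab1 hba1 hba2 hab2)
    (tensorDiff_comp_tensorDiff hab1 hba1 hab2 hba2) (by linarith) (by linarith) ?_ ?_ <;>
  · rw [finrank_prod, finrank_tensorProduct, finrank_tensorProduct, h1.finrank_even,
      h1.finrank_odd, h2.finrank_even, h2.finrank_odd]
    ring
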